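/- For the elliptical Gaussian convergence κ(x,y) = κ₀ exp(−(q²x²+y²)/(2σ²)) with 0 < q < 1, the complex deflection α*(z) = κ₀ σ √(2π/(1−q²)) exp(−q²z²/(2σ²(1−q²))) [erfi(qz/(σ√(2(1−q²)))) − erfi((q²x+iy)/(σ√(2(1−q²))))] satisfies ∂α*/∂z̄ = κ(x,y), where z = x + iy and ∂/∂z̄ = ½(∂/∂x + i∂/∂y). -/

import Mathlib

open Real intervalIntegral

/-- The complex error function (integrated along the segment from `0` to `w`). -/
noncomputable def cerf (w : ℂ) : ℂ :=
  (2 / Real.sqrt π : ℝ) * (w * ∫ t in (0:ℝ)..1, Complex.exp (-((t : ℂ) * w) ^ 2))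

/-- The imaginary error function `erfi(w) = −i erf(iw)`. -/
noncomputable def cerfi (w : ℂ) : ℂ := -Complex.I * cerf (Complex.I * w)

/-- The conjugate complex deflection `α*(z)` of the elliptical Gaussian convergence,
as a function of `x`, `y` with `z = x + iy`. -/
noncomputable def gaussAlphaConj (κ₀ σ q x y : ℝ) : ℂ :=
  (κ₀ * σ * Real.sqrt (2 * π / (1 - q ^ 2)) : ℝ) *
    (Complex.exp (-((q : ℂ) ^ 2 * ((x : ℂ) + Complex.I * (y : ℂ)) ^ 2) /
        (2 * (σ : ℂ) ^ 2 * (1 - (q : ℂ) ^ 2))) *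
      (cerfi ((q : ℂ) * ((x : ℂ) + Complex.I * (y : ℂ)) /
          ((σ : ℂ) * (Real.sqrt (2 * (1 - q ^ 2)) : ℝ))) -
        cerfi (((q : ℂ) ^ 2 * (x : ℂ) + Complex.I * (y : ℂ)) /
          ((σ : ℂ) * (Real.sqrt (2 * (1 - q ^ 2)) : ℝ)))))


open MeasureTheory in
lemma hasDerivAt_I (w : ℂ) :
    HasDerivAt (fun w : ℂ => ∫ t in (0:ℝ)..1, Complex.exp (-((t : ℂ) * w) ^ 2))
      (∫ t in (0:ℝ)..1, (-(2 * (t:ℂ)^2 * w)) * Complex.exp (-((t : ℂ) * w) ^ 2)) w := by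
  have key := intervalIntegral.hasDerivAt_integral_of_dominated_loc_of_deriv_le
    (F := fun (w : ℂ) (t : ℝ) => Complex.exp (-((t : ℂ) * w) ^ 2))
    (F' := fun (w : ℂ) (t : ℝ) => (-(2 * (t:ℂ)^2 * w)) * Complex.exp (-((t : ℂ) * w) ^ 2))
    (x₀ := w) (a := 0) (b := 1) (μ := volume)
    (bound := fun _ => 2 * (‖w‖ + 1) * Real.exp ((‖w‖ + 1)^2))
    (s := Metric.ball w 1) (Metric.ball_mem_nhds w one_pos) ?_ ?_ ?_ ?_ ?_ ?_
  · exact key.2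
  · filter_upwards with x
    exact (Continuous.aestronglyMeasurable (by fun_prop)).restrict
  · apply Continuous.intervalIntegrable; fun_prop
  · exact (Continuous.aestronglyMeasurable (by fun_prop)).restrict
  · filter_upwards with t ht x hx
    have ht' : |t| ≤ 1 := by
      rw [Set.uIoc_of_le (by norm_num : (0:ℝ) ≤ 1)] at ht
      rw [abs_le]; constructor <;> [linarith [ht.1.le]; exact ht.2]
    have hx' : ‖x‖ ≤ ‖w‖ + 1 := by
      have h := mem_ball_iff_norm.mp hx
      calc ‖x‖ = ‖(x - w) + w‖ := by ring_nf
        _ ≤ ‖x - w‖ + ‖w‖ := norm_add_le _ _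
        _ ≤ ‖w‖ + 1 := by linarith
    have htn : ‖(t:ℂ)‖ ≤ 1 := by rw [Complex.norm_real, Real.norm_eq_abs]; exact ht'
    rw [norm_mul]
    have h1 : ‖-(2 * (t:ℂ)^2 * x)‖ ≤ 2 * (‖w‖ + 1) := by
      rw [norm_neg, norm_mul, norm_mul, norm_pow, RCLike.norm_ofNat]
      have h0 : (0:ℝ) ≤ ‖(t:ℂ)‖ := norm_nonneg _
      have hsq : ‖(t:ℂ)‖^2 ≤ 1 := by nlinarith
      calc 2 * ‖(t:ℂ)‖^2 * ‖x‖ ≤ 2 * 1 * (‖w‖ + 1) := by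
            apply mul_le_mul _ hx' (norm_nonneg _) (by norm_num)
            nlinarith
        _ = 2 * (‖w‖ + 1) := by ring
    have h2 : ‖Complex.exp (-((t : ℂ) * x) ^ 2)‖ ≤ Real.exp ((‖w‖ + 1)^2) := by
      rw [Complex.norm_exp]
      apply Real.exp_le_exp.mpr
      have e1 : (-((t : ℂ) * x) ^ 2).re ≤ ‖(-((t : ℂ) * x) ^ 2)‖ := by
        exact Complex.re_le_norm _
      have e2 : ‖(-((t : ℂ) * x) ^ 2)‖ = (‖(t:ℂ)‖ * ‖x‖)^2 := by
        rw [norm_neg, norm_pow, norm_mul]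
      have e3 : ‖(t:ℂ)‖ * ‖x‖ ≤ ‖w‖ + 1 := by
        have := mul_le_mul htn hx' (norm_nonneg _) (by norm_num : (0:ℝ) ≤ 1)
        simpa using this
      have e4 : (‖(t:ℂ)‖ * ‖x‖)^2 ≤ (‖w‖ + 1)^2 := by
        apply pow_le_pow_left₀ (by positivity) e3
      linarith
    exact mul_le_mul h1 h2 (norm_nonneg _) (by positivity)
  · apply Continuous.intervalIntegrable; fun_prop
  · filter_upwards with t ht x hx
    have h : HasDerivAt (fun x : ℂ => -((t : ℂ) * x) ^ 2) (-(2 * (t:ℂ)^2 * x)) x := by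
      have h := (((hasDerivAt_id x).const_mul (t:ℂ)).pow 2).neg
      simp only [id] at h; exact h.congr_deriv (by ring)
    have := h.cexp
    exact this.congr_deriv (by ring)

lemma cerf_hasDerivAt (w : ℂ) :
    HasDerivAt cerf (((2 / Real.sqrt π : ℝ) : ℂ) * Complex.exp (-w^2)) w := by
  have hI := hasDerivAt_I w
  have h := ((hasDerivAt_id w).mul hI).const_mul ((2 / Real.sqrt π : ℝ) : ℂ)
  have key : (∫ t in (0:ℝ)..1, Complex.exp (-((t:ℂ)*w)^2))
      + w * (∫ t in (0:ℝ)..1, (-(2*(t:ℂ)^2*w)) * Complex.exp (-((t:ℂ)*w)^2))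
      = Complex.exp (-w^2) := by
    rw [← intervalIntegral.integral_const_mul]
    rw [← intervalIntegral.integral_add
      (by apply Continuous.intervalIntegrable; fun_prop)
      (by apply Continuous.intervalIntegrable; fun_prop)]
    have hftc := intervalIntegral.integral_eq_sub_of_hasDerivAt
      (f := fun t : ℝ => (t:ℂ) * Complex.exp (-((t:ℂ)*w)^2))
      (f' := fun t : ℝ => Complex.exp (-((t:ℂ)*w)^2)
        + w * ((-(2*(t:ℂ)^2*w)) * Complex.exp (-((t:ℂ)*w)^2)))
      (a := 0) (b := 1)
      (fun t _ => by
        have inner : HasDerivAt (fun u : ℂ => -(u*w)^2) (-(2*(t:ℂ)*w^2)) (t:ℂ) := by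
          have h2 := (((hasDerivAt_id (t:ℂ)).mul_const w).pow 2).neg
          simp only [id] at h2; exact h2.congr_deriv (by ring)
        have hG : HasDerivAt (fun u : ℂ => u * Complex.exp (-(u*w)^2))
            (1 * Complex.exp (-((t:ℂ)*w)^2) + (t:ℂ) * ((-(2*(t:ℂ)*w^2)) * Complex.exp (-((t:ℂ)*w)^2)))
            (t:ℂ) := by
          have := (hasDerivAt_id ((t:ℂ))).mul inner.cexp
          simp only [id] at this; exact this.congr_deriv (by ring)
        have := hG.comp_ofReal
        exact this.congr_deriv (by ring))
      (by apply Continuous.intervalIntegrable; fun_prop)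
    rw [hftc]; push_cast; ring_nf
  have heq : cerf = fun y : ℂ => ((2 / Real.sqrt π : ℝ) : ℂ) *
      (id y * ∫ t in (0:ℝ)..1, Complex.exp (-((t : ℂ) * y) ^ 2)) := rfl
  rw [heq]
  refine h.congr_deriv ?_
  rw [← key]; simp only [id]; ring

lemma cerfi_hasDerivAt (w : ℂ) :
    HasDerivAt cerfi (((2 / Real.sqrt π : ℝ) : ℂ) * Complex.exp (w^2)) w := by
  have hinner : HasDerivAt (fun w : ℂ => Complex.I * w) Complex.I w := by
    simpa using (hasDerivAt_id w).const_mul Complex.I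
  have h := ((cerf_hasDerivAt (Complex.I * w)).comp w hinner).const_mul (-Complex.I)
  have heq : cerfi = fun y : ℂ => -Complex.I * (cerf ∘ fun w => Complex.I * w) y := rfl
  rw [heq]
  refine h.congr_deriv ?_
  have : -(Complex.I * w)^2 = w^2 := by
    rw [mul_pow, Complex.I_sq]; ring
  rw [this]; ring_nf
  rw [Complex.I_sq]; ring

lemma comp_real {f : ℝ → ℂ} {a : ℂ} {t : ℝ} (hf : HasDerivAt f a t)
    {F : ℂ → ℂ} {F' : ℂ} (hF : HasDerivAt F F' (f t)) :
    HasDerivAt (fun s : ℝ => F (f s)) (F' * a) t := by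
  have h := hF.complexToReal_fderiv.comp_hasDerivAt t hf
  exact h.congr_deriv (by simp [mul_comm])

/-- **Deflection consistency.** For the elliptical Gaussian convergence
`κ(x,y) = κ₀ exp(−(q²x²+y²)/(2σ²))` with `0 < q < 1`, the closed-form deflection
`α*` satisfies the Wirtinger relation `∂α*/∂z̄ = κ`, where
`∂/∂z̄ = ½(∂/∂x + i ∂/∂y)`. -/
theorem gaussian_deflection_dbar (κ₀ σ q : ℝ) (hκ : 0 < κ₀) (hσ : 0 < σ)
    (hq0 : 0 < q) (hq1 : q < 1) :
    ∀ x y : ℝ,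
      (1 / 2 : ℂ) * (deriv (fun x' : ℝ => gaussAlphaConj κ₀ σ q x' y) x +
          Complex.I * deriv (fun y' : ℝ => gaussAlphaConj κ₀ σ q x y') y)
        = ((κ₀ * Real.exp (-(q ^ 2 * x ^ 2 + y ^ 2) / (2 * σ ^ 2)) : ℝ) : ℂ) := by
  intro x y
  have h1q : (0:ℝ) < 1 - q ^ 2 := by nlinarith
  set s : ℝ := Real.sqrt (2 * (1 - q ^ 2)) with hs_def
  have hs : 0 < s := Real.sqrt_pos.mpr (by linarith)
  have hs2 : s ^ 2 = 2 * (1 - q ^ 2) := Real.sq_sqrt (by linarith)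
  set K : ℂ := ((κ₀ * σ * Real.sqrt (2 * π / (1 - q ^ 2)) : ℝ) : ℂ) with hK_def
  set c : ℂ := 2 * (σ : ℂ) ^ 2 * (1 - (q : ℂ) ^ 2) with hc_def
  set d : ℂ := (σ : ℂ) * ((s : ℝ) : ℂ) with hd_def
  set cπ : ℂ := ((2 / Real.sqrt π : ℝ) : ℂ) with hcπ_def
  have hσ' : (σ : ℂ) ≠ 0 := Complex.ofReal_ne_zero.mpr hσ.ne'
  have hq' : (1 : ℂ) - (q : ℂ) ^ 2 ≠ 0 := by
    have h := Complex.ofReal_ne_zero.mpr h1q.ne'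
    push_cast at h; simpa using h
  have hc : c ≠ 0 := by
    rw [hc_def]; apply mul_ne_zero (mul_ne_zero two_ne_zero (pow_ne_zero 2 hσ')) hq'
  have hd : d ≠ 0 := mul_ne_zero hσ' (Complex.ofReal_ne_zero.mpr hs.ne')
  have hd2 : d ^ 2 = c := by
    have hss : ((s : ℝ) : ℂ) ^ 2 = ((2 * (1 - q ^ 2) : ℝ) : ℂ) := by
      rw [← Complex.ofReal_pow, hs2]
    rw [hd_def, hc_def, mul_pow, hss]; push_cast; ring
  set z : ℂ := (x : ℂ) + Complex.I * (y : ℂ) with hz_def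
  set wv : ℂ := (q : ℂ) ^ 2 * (x : ℂ) + Complex.I * (y : ℂ) with hwv_def
  set EE : ℂ := Complex.exp (-((q : ℂ) ^ 2 * z ^ 2) / c) with hEE_def
  set Ep : ℂ := -((q : ℂ) ^ 2 * (2 * z)) / c with hEp_def
  set GA : ℂ := cπ * Complex.exp (((q : ℂ) * z / d) ^ 2) with hGA_def
  set GB : ℂ := cπ * Complex.exp ((wv / d) ^ 2) with hGB_def
  set CA : ℂ := cerfi ((q : ℂ) * z / d) with hCA_def
  set CB : ℂ := cerfi (wv / d) with hCB_def
  -- complex derivatives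
  have hEc : ∀ u : ℂ, HasDerivAt (fun u : ℂ => Complex.exp (-((q : ℂ) ^ 2 * u ^ 2) / c))
      ((-((q : ℂ) ^ 2 * (2 * u)) / c) * Complex.exp (-((q : ℂ) ^ 2 * u ^ 2) / c)) u := by
    intro u
    have h1 : HasDerivAt (fun u : ℂ => -((q : ℂ) ^ 2 * u ^ 2) / c)
        (-((q : ℂ) ^ 2 * (2 * u)) / c) u := by
      have h := (((hasDerivAt_pow 2 u).const_mul ((q : ℂ) ^ 2)).neg).div_const c
      exact h.congr_deriv (by ring)
    have := h1.cexp
    exact this.congr_deriv (by ring)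
  have hAc : HasDerivAt (fun u : ℂ => cerfi ((q : ℂ) * u / d)) (GA * ((q : ℂ) / d)) z := by
    have hin : HasDerivAt (fun u : ℂ => (q : ℂ) * u / d) ((q : ℂ) / d) z := by
      have h := ((hasDerivAt_id z).const_mul (q : ℂ)).div_const d
      simp only [id] at h; exact h.congr_deriv (by ring)
    exact (cerfi_hasDerivAt _).comp z hin
  have hBc : HasDerivAt (fun v : ℂ => cerfi (v / d)) (GB * (1 / d)) wv := by
    have hin : HasDerivAt (fun v : ℂ => v / d) (1 / d) wv := by
      have h := (hasDerivAt_id wv).div_const d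
      simp only [id] at h; convert h using 1 <;> ring
    exact (cerfi_hasDerivAt _).comp wv hin
  -- real-direction inner derivatives
  have hor : ∀ t : ℝ, HasDerivAt (fun t' : ℝ => ((t' : ℝ) : ℂ)) 1 t := fun t => by
    have h := Complex.ofRealCLM.hasDerivAt (x := t); simp at h; exact h
  have hzx : HasDerivAt (fun x' : ℝ => ((x' : ℂ) + Complex.I * (y : ℂ))) 1 x :=
    (hor x).add_const _
  have hwx : HasDerivAt (fun x' : ℝ => ((q : ℂ) ^ 2 * (x' : ℂ) + Complex.I * (y : ℂ)))
      ((q : ℂ) ^ 2) x := by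
    simpa using ((hor x).const_mul ((q : ℂ) ^ 2)).add_const (Complex.I * (y : ℂ))
  have hzy : HasDerivAt (fun y' : ℝ => ((x : ℂ) + Complex.I * (y' : ℂ))) Complex.I y := by
    simpa using ((hor y).const_mul Complex.I).const_add (x : ℂ)
  have hwy : HasDerivAt (fun y' : ℝ => ((q : ℂ) ^ 2 * (x : ℂ) + Complex.I * (y' : ℂ)))
      Complex.I y := by
    simpa using ((hor y).const_mul Complex.I).const_add ((q : ℂ) ^ 2 * (x : ℂ))
  -- assemble x-direction
  have hEx := comp_real hzx (hEc z)
  have hAx := comp_real hzx hAc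
  have hBx := comp_real hwx hBc
  have hx0 := ((hEx.mul (hAx.sub hBx)).const_mul K)
  have hx : HasDerivAt (fun x' : ℝ => gaussAlphaConj κ₀ σ q x' y)
      (K * (((Ep * EE) * 1) * (CA - CB) + EE * ((GA * ((q:ℂ)/d)) * 1 - (GB * (1/d)) * (q:ℂ)^2))) x := hx0
  have hEy := comp_real hzy (hEc z)
  have hAy := comp_real hzy hAc
  have hBy := comp_real hwy hBc
  have hy0 := ((hEy.mul (hAy.sub hBy)).const_mul K)
  have hy : HasDerivAt (fun y' : ℝ => gaussAlphaConj κ₀ σ q x y')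
      (K * (((Ep * EE) * Complex.I) * (CA - CB) + EE * ((GA * ((q:ℂ)/d)) * Complex.I - (GB * (1/d)) * Complex.I))) y := hy0
  rw [hx.deriv, hy.deriv]
  -- algebra
  have hI : (Complex.I : ℂ) ^ 2 = -1 := Complex.I_sq
  have step1 : (1 / 2 : ℂ) *
      ((K * (((Ep * EE) * 1) * (CA - CB) + EE * ((GA * ((q:ℂ)/d)) * 1 - (GB * (1/d)) * (q:ℂ)^2))) +
        Complex.I * (K * (((Ep * EE) * Complex.I) * (CA - CB) + EE * ((GA * ((q:ℂ)/d)) * Complex.I - (GB * (1/d)) * Complex.I))))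
      = ((1 - (q:ℂ)^2) / 2) * K * (EE * GB) / d := by
    linear_combination ((1/2 : ℂ) * K * (Ep * EE) * (CA - CB)
      + (1/2 : ℂ) * K * EE * GA * ((q:ℂ)/d) - (1/2 : ℂ) * K * EE * GB * (1/d)) * hI
  rw [step1]
  -- combine exponentials
  have hexp : EE * Complex.exp ((wv / d) ^ 2)
      = Complex.exp (((-(q ^ 2 * x ^ 2 + y ^ 2) / (2 * σ ^ 2) : ℝ) : ℂ)) := by
    rw [hEE_def, ← Complex.exp_add]
    congr 1
    rw [div_pow, hd2, ← add_div]
    rw [hc_def, hz_def, hwv_def]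
    push_cast
    rw [div_eq_div_iff (by exact hc) (mul_ne_zero two_ne_zero (pow_ne_zero 2 hσ'))]
    linear_combination (2 * (σ:ℂ)^2 * (1 - (q:ℂ)^2) * (y:ℂ)^2) * hI
  -- the coefficient
  have hcoef : ((1 - (q:ℂ)^2) / 2) * K * cπ = (κ₀ : ℂ) * d := by
    have ht : (0:ℝ) < Real.sqrt (1 - q^2) := Real.sqrt_pos.mpr h1q
    have hp : (0:ℝ) < Real.sqrt π := Real.sqrt_pos.mpr Real.pi_pos
    have ht2 : (Real.sqrt (1 - q^2))^2 = 1 - q^2 := Real.sq_sqrt h1q.le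
    have hA : Real.sqrt (2 * π / (1 - q^2))
        = Real.sqrt 2 * Real.sqrt π / Real.sqrt (1 - q^2) := by
      rw [Real.sqrt_div (by positivity), Real.sqrt_mul (by norm_num)]
    have hsplit : s = Real.sqrt 2 * Real.sqrt (1 - q^2) := by
      rw [hs_def, Real.sqrt_mul (by norm_num)]
    have hreal : (1 - q^2)/2 * (κ₀ * σ * Real.sqrt (2 * π / (1 - q^2))) * (2 / Real.sqrt π)
        = κ₀ * (σ * s) := by
      rw [hA, hsplit]
      field_simp
      ring_nf
      linear_combination (-1 : ℝ) * ht2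
    rw [hK_def, hcπ_def, hd_def]
    calc ((1 - (q:ℂ)^2) / 2) * ((κ₀ * σ * Real.sqrt (2 * π / (1 - q ^ 2)) : ℝ) : ℂ)
          * ((2 / Real.sqrt π : ℝ) : ℂ)
        = (((1 - q^2)/2 * (κ₀ * σ * Real.sqrt (2 * π / (1 - q^2))) * (2 / Real.sqrt π) : ℝ) : ℂ) := by
          push_cast; ring
      _ = ((κ₀ * (σ * s) : ℝ) : ℂ) := by rw [hreal]
      _ = (κ₀ : ℂ) * ((σ : ℂ) * ((s:ℝ) : ℂ)) := by push_cast; ring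
  -- finish
  have : ((1 - (q:ℂ)^2) / 2) * K * (EE * GB) / d
      = ((κ₀ * Real.exp (-(q ^ 2 * x ^ 2 + y ^ 2) / (2 * σ ^ 2)) : ℝ) : ℂ) := by
    rw [hGB_def]
    have expand : ((1 - (q:ℂ)^2) / 2) * K * (EE * (cπ * Complex.exp ((wv / d) ^ 2))) / d
        = (((1 - (q:ℂ)^2) / 2) * K * cπ) * (EE * Complex.exp ((wv / d) ^ 2)) / d := by ring
    rw [expand, hcoef, hexp, Complex.ofReal_mul, Complex.ofReal_exp]
    field_simp
  exact this
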